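/- Fix a cutoff w as below. Let ν ∈ ℂ with Re(ν) = 0 and ν ≠ 0, and let s ∈ ℂ with Re(s) < 1. Then ∫_0^∞ w(x) R_ν(2√x) x^{−s−ν} dx = cos(πν) ( w̃(1−s−2ν) Γ(2ν) + w̃(1−s) Γ(−2ν) ), the integral converging absolutely. -/

import Mathlib

open Complex MeasureTheory

noncomputable section

/-- Mellin transform of the cutoff: `w̃(σ) = ∫_0^∞ w(x) x^{σ−1} dx` (for `Re σ > 0`). -/
def mellinW0 (w : ℝ → ℝ) (σ : ℂ) : ℂ :=
  ∫ x in Set.Ioi (0 : ℝ), (w x : ℂ) * (x : ℂ) ^ (σ - 1)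

/-- `P_μ(x) = (x/2)^μ/Γ(μ+1)`. -/
def Pfun (μ : ℂ) (x : ℝ) : ℂ := ((x : ℂ) / 2) ^ μ / Complex.Gamma (μ + 1)

/-- `R_ν(x) = π(P_{−2ν}(x) − P_{2ν}(x))/(2 sin(πν))`. -/
def Rfun (ν : ℂ) (x : ℝ) : ℂ :=
  (Real.pi : ℂ) / (2 * Complex.sin (Real.pi * ν)) * (Pfun (-2 * ν) x - Pfun (2 * ν) x)

/-- `(√x : ℂ)^z = x^(z/2)` for `x > 0`. -/
lemma sqrt_cpow_aux {x : ℝ} (hx : 0 < x) (z : ℂ) :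
    ((Real.sqrt x : ℝ) : ℂ) ^ z = (x : ℂ) ^ (z / 2) := by
  have h1 : ((Real.sqrt x : ℝ) : ℂ) = (x : ℂ) ^ ((1 / 2 : ℝ) : ℂ) := by
    rw [Real.sqrt_eq_rpow, Complex.ofReal_cpow hx.le]
  have him : (Complex.log (x : ℂ) * ((1 / 2 : ℝ) : ℂ)).im = 0 := by
    simp [Complex.mul_im, Complex.log_im, Complex.arg_ofReal_of_nonneg hx.le]
  rw [h1, ← Complex.cpow_mul _ (by rw [him]; exact neg_neg_iff_pos.mpr Real.pi_pos)
    (by rw [him]; exact Real.pi_pos.le)]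
  congr 1
  push_cast
  ring

/-- Integrability of `w(x) x^(σ-1)` on `(0,∞)` for compactly supported bounded `w`. -/
lemma mellin_integrable_aux (w : ℝ → ℝ) (b M : ℝ) (hb : 0 < b)
    (hwc : ContinuousOn w (Set.Ioi 0)) (hw0 : ∀ x : ℝ, b ≤ x → w x = 0)
    (hM : ∀ x ∈ Set.Ioc (0 : ℝ) b, |w x| ≤ M)
    (σ : ℂ) (hσ : 0 < σ.re) :
    IntegrableOn (fun x : ℝ => (w x : ℂ) * (x : ℂ) ^ (σ - 1)) (Set.Ioi 0) := by
  have hmeas : AEStronglyMeasurable (fun x : ℝ => (w x : ℂ) * (x : ℂ) ^ (σ - 1))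
      (volume.restrict (Set.Ioi (0 : ℝ))) := by
    apply ContinuousOn.aestronglyMeasurable _ measurableSet_Ioi
    apply ContinuousOn.mul
    · exact Complex.continuous_ofReal.comp_continuousOn hwc
    · intro x hx
      exact (Complex.continuousAt_ofReal_cpow_const x (σ - 1)
        (Or.inr (ne_of_gt hx))).continuousWithinAt
  rw [← Set.Ioc_union_Ioi_eq_Ioi hb.le]
  apply IntegrableOn.union
  · -- on (0, b]
    have hg : IntegrableOn (fun x : ℝ => M * x ^ (σ.re - 1)) (Set.Ioc 0 b) := by
      apply Integrable.const_mul
      have := (intervalIntegral.integrableOn_Ioo_rpow_iff hb).mpr (by linarith : (-1 : ℝ) < σ.re - 1)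
      exact this.congr_set_ae MeasureTheory.Ioo_ae_eq_Ioc.symm
    apply hg.mono' ((hmeas.mono_measure
      (Measure.restrict_mono (Set.Ioc_subset_Ioi_self) le_rfl)))
    rw [ae_restrict_iff' measurableSet_Ioc]
    filter_upwards with x hx
    rw [norm_mul,
      Complex.norm_cpow_eq_rpow_re_of_pos hx.1, Complex.sub_re, Complex.one_re]
    gcongr
    · exact Real.rpow_nonneg hx.1.le _
    · simpa using hM x hx
  · -- on (b, ∞): w = 0
    have : IntegrableOn (fun _ : ℝ => (0 : ℂ)) (Set.Ioi b) := integrableOn_zero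
    apply this.congr_fun _ measurableSet_Ioi
    intro x hx
    simp [hw0 x (le_of_lt hx)]

/-- For a smooth cutoff `w` (≡1 on `(0,a]`, ≡0 on `[b,∞)`), `Re ν = 0`, `ν ≠ 0` and
`Re s < 1`: `∫_0^∞ w(x) R_ν(2√x) x^{−s−ν} dx = cos(πν)(w̃(1−s−2ν)Γ(2ν) + w̃(1−s)Γ(−2ν))`,
the integral converging absolutely. -/
theorem mean_value_stmt15 (w : ℝ → ℝ) (a b : ℝ) (ha : 0 < a) (hab : a < b)
    (hw : ContDiffOn ℝ (⊤ : ℕ∞) w (Set.Ioi 0))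
    (hw1 : ∀ x : ℝ, 0 < x → x ≤ a → w x = 1) (hw0 : ∀ x : ℝ, b ≤ x → w x = 0)
    (ν s : ℂ) (hν : ν.re = 0 ∧ ν ≠ 0) (hs : s.re < 1) :
    IntegrableOn (fun x : ℝ => (w x : ℂ) * Rfun ν (2 * Real.sqrt x) * (x : ℂ) ^ (-s - ν))
      (Set.Ioi 0) ∧
    (∫ x in Set.Ioi (0 : ℝ), (w x : ℂ) * Rfun ν (2 * Real.sqrt x) * (x : ℂ) ^ (-s - ν))
      = Complex.cos (Real.pi * ν) *
          (mellinW0 w (1 - s - 2 * ν) * Complex.Gamma (2 * ν) +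
            mellinW0 w (1 - s) * Complex.Gamma (-2 * ν)) := by
  obtain ⟨hνre, hνne⟩ := hν
  have hb : (0 : ℝ) < b := ha.trans hab
  have hwc : ContinuousOn w (Set.Ioi 0) := hw.continuousOn
  -- bound on |w| on (0, b]
  obtain ⟨C, hC⟩ : ∃ C, ∀ x ∈ Set.Icc a b, ‖w x‖ ≤ C := by
    apply IsCompact.exists_bound_of_continuousOn isCompact_Icc
    exact hwc.mono (fun x hx => lt_of_lt_of_le ha hx.1)
  have hM : ∀ x ∈ Set.Ioc (0 : ℝ) b, |w x| ≤ max 1 C := by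
    intro x hx
    rcases le_or_gt x a with h | h
    · rw [hw1 x hx.1 h]; simp
    · exact le_trans (hC x ⟨h.le, hx.2⟩) (le_max_right _ _)
  -- nonvanishing facts
  have hsin : Complex.sin ((Real.pi : ℂ) * ν) ≠ 0 := by
    rw [Ne, Complex.sin_eq_zero_iff]
    rintro ⟨k, hk⟩
    have hπ : (Real.pi : ℂ) ≠ 0 := Complex.ofReal_ne_zero.mpr Real.pi_ne_zero
    have hν' : ν = (k : ℂ) := mul_left_cancel₀ hπ (by rw [hk]; ring)
    apply hνne
    rw [hν'] at hνre ⊢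
    have : (k : ℝ) = 0 := by simpa using hνre
    simp [show k = 0 by exact_mod_cast this]
  have hcos : Complex.cos ((Real.pi : ℂ) * ν) ≠ 0 := by
    rw [Ne, Complex.cos_eq_zero_iff]
    rintro ⟨k, hk⟩
    have hπ : (Real.pi : ℂ) ≠ 0 := Complex.ofReal_ne_zero.mpr Real.pi_ne_zero
    have h2 : (Real.pi : ℂ) * (2 * ν) = (Real.pi : ℂ) * (2 * (k : ℂ) + 1) := by
      linear_combination 2 * hk
    have h3 : (2 : ℂ) * ν = 2 * (k : ℂ) + 1 := mul_left_cancel₀ hπ h2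
    have h4 := congrArg Complex.re h3
    simp [hνre] at h4
    have h5 : (2 * k + 1 : ℝ) = 0 := by push_cast; linarith
    have : (2 * k + 1 : ℤ) = 0 := by exact_mod_cast h5
    omega
  have hΓ1 : Complex.Gamma (1 - 2 * ν) ≠ 0 := by
    apply Complex.Gamma_ne_zero_of_re_pos
    simp [Complex.sub_re, hνre]
  have hΓ2 : Complex.Gamma (1 + 2 * ν) ≠ 0 := by
    apply Complex.Gamma_ne_zero_of_re_pos
    simp [Complex.add_re, hνre]
  -- reflection identities
  have e1 : Complex.cos ((Real.pi : ℂ) * ν) * Complex.Gamma (2 * ν)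
      = (Real.pi : ℂ) / (2 * Complex.sin ((Real.pi : ℂ) * ν)) / Complex.Gamma (1 - 2 * ν) := by
    have key := Complex.Gamma_mul_Gamma_one_sub (2 * ν)
    rw [show (Real.pi : ℂ) * (2 * ν) = 2 * ((Real.pi : ℂ) * ν) by ring,
      Complex.sin_two_mul] at key
    rw [eq_div_iff hΓ1, mul_assoc, key]
    field_simp
  have e2 : Complex.cos ((Real.pi : ℂ) * ν) * Complex.Gamma (-2 * ν)
      = -((Real.pi : ℂ) / (2 * Complex.sin ((Real.pi : ℂ) * ν)) / Complex.Gamma (1 + 2 * ν)) := by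
    have key := Complex.Gamma_mul_Gamma_one_sub (-2 * ν)
    rw [show (1 : ℂ) - (-2 * ν) = 1 + 2 * ν by ring,
      show (Real.pi : ℂ) * (-2 * ν) = -(2 * ((Real.pi : ℂ) * ν)) by ring,
      Complex.sin_neg, Complex.sin_two_mul] at key
    rw [← neg_div, eq_div_iff hΓ2, mul_assoc, key]
    field_simp
  -- the two Mellin integrands
  set σ₁ : ℂ := 1 - s - 2 * ν with hσ₁
  set σ₂ : ℂ := 1 - s with hσ₂
  have hσ₂re : 0 < σ₂.re := by
    rw [hσ₂, Complex.sub_re, Complex.one_re]; linarith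
  have hσ₁re : 0 < σ₁.re := by
    rw [hσ₁, Complex.sub_re, Complex.mul_re]
    simp [hνre]
    linarith
  have hg1 : IntegrableOn (fun x : ℝ => (w x : ℂ) * (x : ℂ) ^ (σ₁ - 1)) (Set.Ioi 0) :=
    mellin_integrable_aux w b (max 1 C) hb hwc hw0 hM σ₁ hσ₁re
  have hg2 : IntegrableOn (fun x : ℝ => (w x : ℂ) * (x : ℂ) ^ (σ₂ - 1)) (Set.Ioi 0) :=
    mellin_integrable_aux w b (max 1 C) hb hwc hw0 hM σ₂ hσ₂re
  set c : ℂ := (Real.pi : ℂ) / (2 * Complex.sin ((Real.pi : ℂ) * ν)) with hc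
  set C₁ : ℂ := c / Complex.Gamma (1 - 2 * ν) with hC₁
  set C₂ : ℂ := -(c / Complex.Gamma (1 + 2 * ν)) with hC₂
  -- pointwise identity
  have hEq : Set.EqOn (fun x : ℝ => (w x : ℂ) * Rfun ν (2 * Real.sqrt x) * (x : ℂ) ^ (-s - ν))
      (fun x : ℝ => C₁ * ((w x : ℂ) * (x : ℂ) ^ (σ₁ - 1))
        + C₂ * ((w x : ℂ) * (x : ℂ) ^ (σ₂ - 1))) (Set.Ioi 0) := by
    intro x hx
    have hx0 : (0 : ℝ) < x := hx
    have hxne : (x : ℂ) ≠ 0 := Complex.ofReal_ne_zero.mpr (ne_of_gt hx0)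
    have hhalf : ((2 * Real.sqrt x : ℝ) : ℂ) / 2 = ((Real.sqrt x : ℝ) : ℂ) := by
      push_cast; ring
    have hp1 : ((Real.sqrt x : ℝ) : ℂ) ^ (-2 * ν) = (x : ℂ) ^ (-ν) := by
      rw [sqrt_cpow_aux hx0]; congr 1; ring
    have hp2 : ((Real.sqrt x : ℝ) : ℂ) ^ (2 * ν) = (x : ℂ) ^ ν := by
      rw [sqrt_cpow_aux hx0]; congr 1; ring
    have hq1 : (x : ℂ) ^ (-ν) * (x : ℂ) ^ (-s - ν) = (x : ℂ) ^ (σ₁ - 1) := by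
      rw [← Complex.cpow_add _ _ hxne]; congr 1; rw [hσ₁]; ring
    have hq2 : (x : ℂ) ^ ν * (x : ℂ) ^ (-s - ν) = (x : ℂ) ^ (σ₂ - 1) := by
      rw [← Complex.cpow_add _ _ hxne]; congr 1; rw [hσ₂]; ring
    simp only [Rfun, Pfun, hhalf, hp1, hp2]
    rw [show (-2 : ℂ) * ν + 1 = 1 - 2 * ν by ring, show (2 : ℂ) * ν + 1 = 1 + 2 * ν by ring]
    rw [hC₁, hC₂, hc, ← hq1, ← hq2]
    ring
  have hF : IntegrableOn (fun x : ℝ => C₁ * ((w x : ℂ) * (x : ℂ) ^ (σ₁ - 1))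
      + C₂ * ((w x : ℂ) * (x : ℂ) ^ (σ₂ - 1))) (Set.Ioi 0) :=
    (hg1.const_mul C₁).add (hg2.const_mul C₂)
  constructor
  · exact hF.congr_fun hEq.symm measurableSet_Ioi
  · rw [setIntegral_congr_fun measurableSet_Ioi hEq,
      integral_add ((hg1.const_mul C₁)) ((hg2.const_mul C₂)),
      integral_const_mul, integral_const_mul]
    rw [← e1, ← e2, mellinW0, mellinW0]
    ring
end
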